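/- Fix t > 0 and y ∈ ℝ. If μ̂ ∈ ℝ satisfies E₁(μ̂, t) = y, then μ̂ is a global maximizer of the truncated Gaussian likelihood μ ↦ φ(y − μ)/Z₁(μ,t); that is, for every μ ∈ ℝ, φ(y − μ)/Z₁(μ,t) ≤ φ(y − μ̂)/Z₁(μ̂,t). -/
import Mathlib

open MeasureTheory

/-- Standard Gaussian density `φ(x) = (2π)^{-1/2} exp(-x²/2)`. -/
noncomputable def gpdf (x : ℝ) : ℝ := (Real.sqrt (2 * Real.pi))⁻¹ * Real.exp (-x ^ 2 / 2)

/-- Standard Gaussian CDF `Φ(x)`. -/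
noncomputable def gcdf (x : ℝ) : ℝ := ∫ t in Set.Iic x, gpdf t

/-- Normalizing constant `Z₁(μ,t) = 1 - Φ(t-μ) + Φ(-t-μ)`. -/
noncomputable def Z1 (μ t : ℝ) : ℝ := 1 - gcdf (t - μ) + gcdf (-t - μ)

/-- Mean of `N(μ,1)` conditioned on the two-sided tail `(-∞,-t] ∪ [t,∞)`. -/
noncomputable def E1 (μ t : ℝ) : ℝ :=
  (Z1 μ t)⁻¹ * ∫ x in {x : ℝ | t ≤ |x|}, x * gpdf (x - μ)

lemma gpdf_pos (x : ℝ) : 0 < gpdf x := by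
  have h : (0:ℝ) < 2 * Real.pi := by positivity
  exact mul_pos (inv_pos.mpr (Real.sqrt_pos.mpr h)) (Real.exp_pos _)

lemma gpdf_eq (x : ℝ) :
    gpdf x = (Real.sqrt (2 * Real.pi))⁻¹ * Real.exp (-(1/2) * x ^ 2) := by
  unfold gpdf; ring_nf

lemma integrable_gpdf : Integrable gpdf := by
  have h := (integrable_exp_neg_mul_sq (b := (1/2:ℝ)) (by norm_num)).const_mul
    (Real.sqrt (2 * Real.pi))⁻¹
  refine h.congr ?_
  filter_upwards with x
  rw [gpdf_eq]

lemma integrable_id_mul_gpdf : Integrable (fun x => x * gpdf x) := by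
  have h := (integrable_mul_exp_neg_mul_sq (b := (1/2:ℝ)) (by norm_num)).const_mul
    (Real.sqrt (2 * Real.pi))⁻¹
  refine h.congr ?_
  filter_upwards with x
  rw [gpdf_eq]; ring

lemma integral_gpdf : ∫ x, gpdf x = 1 := by
  have h : ∫ x : ℝ, Real.exp (-(1/2) * x ^ 2) = Real.sqrt (2 * Real.pi) := by
    rw [integral_gaussian]
    congr 1
    ring
  have hs : Real.sqrt (2 * Real.pi) ≠ 0 := by positivity
  calc ∫ x, gpdf x = ∫ x, (Real.sqrt (2 * Real.pi))⁻¹ * Real.exp (-(1/2) * x ^ 2) := by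
        simp_rw [gpdf_eq]
    _ = (Real.sqrt (2 * Real.pi))⁻¹ * ∫ x : ℝ, Real.exp (-(1/2) * x ^ 2) :=
        integral_const_mul _ _
    _ = 1 := by rw [h, inv_mul_cancel₀ hs]

lemma setIntegral_shift (f : ℝ → ℝ) (s : Set ℝ) (hs : MeasurableSet s) (μ : ℝ) :
    ∫ x in (fun x => x - μ) ⁻¹' s, f (x - μ) = ∫ x in s, f x := by
  have hps : MeasurableSet ((fun x => x - μ) ⁻¹' s) :=
    hs.preimage (measurable_id.sub_const μ)
  rw [← integral_indicator hps, ← integral_indicator hs]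
  have heq : ∀ x, ((fun x => x - μ) ⁻¹' s).indicator (fun x => f (x - μ)) x
      = s.indicator f (x - μ) := by
    intro x
    by_cases h : x - μ ∈ s <;> simp [Set.indicator, Set.mem_preimage, h]
  simp_rw [heq, sub_eq_add_neg]
  exact integral_add_right_eq_self (s.indicator f) (-μ)

lemma tail_set (t : ℝ) : {x : ℝ | t ≤ |x|} = Set.Iic (-t) ∪ Set.Ici t := by
  ext x
  simp [le_abs, le_neg, or_comm]

lemma Z1_eq (μ t : ℝ) (ht : 0 < t) : Z1 μ t = ∫ x in Set.Iic (-t) ∪ Set.Ici t, gpdf (x - μ) := by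
  have hint : Integrable (fun x => gpdf (x - μ)) := integrable_gpdf.comp_sub_right μ
  have h1 : gcdf (-t - μ) = ∫ x in Set.Iic (-t), gpdf (x - μ) := by
    have : (fun x => x - μ) ⁻¹' Set.Iic (-t - μ) = Set.Iic (-t) := by
      ext x; simp [sub_le_iff_le_add, sub_add_cancel]
    rw [gcdf, ← setIntegral_shift gpdf _ measurableSet_Iic μ, this]
  have h2 : 1 - gcdf (t - μ) = ∫ x in Set.Ici t, gpdf (x - μ) := by
    have hadd := intervalIntegral.integral_Iic_add_Ioi (b := t - μ) (μ := volume)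
      integrable_gpdf.integrableOn integrable_gpdf.integrableOn
    rw [integral_gpdf] at hadd
    have h3 : ∫ x in Set.Ioi (t - μ), gpdf x = ∫ x in Set.Ioi t, gpdf (x - μ) := by
      have : (fun x => x - μ) ⁻¹' Set.Ioi (t - μ) = Set.Ioi t := by
        ext x; simp [sub_lt_sub_iff_right, lt_sub_iff_add_lt, sub_lt_iff_lt_add]
      rw [← setIntegral_shift gpdf _ measurableSet_Ioi μ, this]
    have h4 : ∫ x in Set.Ioi t, gpdf (x - μ) = ∫ x in Set.Ici t, gpdf (x - μ) :=
      setIntegral_congr_set Ioi_ae_eq_Ici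
    rw [gcdf]
    linarith [hadd, h3, h4]
  have hdisj : Disjoint (Set.Iic (-t)) (Set.Ici t) :=
    Set.Iic_disjoint_Ici.mpr (by linarith)
  rw [setIntegral_union hdisj measurableSet_Ici hint.integrableOn hint.integrableOn]
  rw [Z1, h1, h2]
  ring

lemma Z1_pos (μ t : ℝ) (ht : 0 < t) : 0 < Z1 μ t := by
  rw [Z1_eq μ t ht]
  have hint : IntegrableOn (fun x => gpdf (x - μ)) (Set.Iic (-t) ∪ Set.Ici t) :=
    (integrable_gpdf.comp_sub_right μ).integrableOn
  have hmeas : MeasurableSet (Set.Iic (-t) ∪ Set.Ici t) :=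
    measurableSet_Iic.union measurableSet_Ici
  rw [setIntegral_pos_iff_support_of_nonneg_ae
    (Filter.Eventually.of_forall fun x => (gpdf_pos _).le) hint]
  have hsupp : Function.support (fun x => gpdf (x - μ)) = Set.univ := by
    ext x; simp [Function.support, (gpdf_pos (x - μ)).ne']
  rw [hsupp, Set.univ_inter]
  have : (volume : Measure ℝ) (Set.Ici t) ≤ volume (Set.Iic (-t) ∪ Set.Ici t) :=
    measure_mono Set.subset_union_right
  rw [Real.volume_Ici] at this
  simp only [top_le_iff] at this
  rw [this]
  exact ENNReal.zero_lt_top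

/-- For fixed `t > 0` and `y`, any solution `μ̂` of `E₁(μ̂,t) = y` is a global
maximizer of the truncated Gaussian likelihood `μ ↦ φ(y-μ)/Z₁(μ,t)`. -/
theorem truncGauss_mle_global_max (t y μhat : ℝ) (ht : 0 < t)
    (hsol : E1 μhat t = y) :
    ∀ μ : ℝ, gpdf (y - μ) / Z1 μ t ≤ gpdf (y - μhat) / Z1 μhat t := by
  intro μ
  set A : Set ℝ := Set.Iic (-t) ∪ Set.Ici t with hA
  have hmeas : MeasurableSet A := measurableSet_Iic.union measurableSet_Ici
  have hZμ : 0 < Z1 μ t := Z1_pos μ t ht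
  have hZh : 0 < Z1 μhat t := Z1_pos μhat t ht
  -- integrability facts
  have hg : Integrable (fun x => gpdf (x - μhat)) := integrable_gpdf.comp_sub_right μhat
  have hgμ : Integrable (fun x => gpdf (x - μ)) := integrable_gpdf.comp_sub_right μ
  have hxg : Integrable (fun x => x * gpdf (x - μhat)) := by
    have h1 : Integrable (fun u => (u + μhat) * gpdf u) := by
      have := integrable_id_mul_gpdf.add (integrable_gpdf.const_mul μhat)
      refine this.congr ?_
      filter_upwards with u
      simp only [Pi.add_apply]
      ring
    have h2 := h1.comp_sub_right μhat
    refine h2.congr ?_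
    filter_upwards with x
    simp
  -- the conditional-mean equation
  have hI : ∫ x in A, x * gpdf (x - μhat) = y * Z1 μhat t := by
    have h := hsol
    rw [E1, tail_set, ← hA] at h
    field_simp at h
    linarith [h]
  set δ : ℝ := μ - μhat with hδ
  set c : ℝ := (μ ^ 2 - μhat ^ 2) / 2 with hc
  set e : ℝ := Real.exp (δ * y - c) with he
  -- pointwise exponential identity
  have hid : ∀ x : ℝ, gpdf (x - μ) = Real.exp (δ * x - c) * gpdf (x - μhat) := by
    intro x
    rw [gpdf, gpdf, mul_left_comm, ← Real.exp_add]
    congr 1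
    rw [hδ, hc]
    ring_nf
  -- pointwise lower bound
  have hpt : ∀ x : ℝ,
      e * gpdf (x - μhat) + e * δ * (x - y) * gpdf (x - μhat) ≤ gpdf (x - μ) := by
    intro x
    rw [hid x]
    have h1 : δ * (x - y) + 1 ≤ Real.exp (δ * (x - y)) := Real.add_one_le_exp _
    have h2 : e * (1 + δ * (x - y)) ≤ Real.exp (δ * x - c) := by
      have := mul_le_mul_of_nonneg_left h1 (Real.exp_pos (δ * y - c)).le
      rw [← Real.exp_add] at this
      have heq : δ * y - c + δ * (x - y) = δ * x - c := by ring
      rw [heq] at this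
      rw [he]
      linarith [this]
    have h3 := mul_le_mul_of_nonneg_right h2 (gpdf_pos (x - μhat)).le
    nlinarith [h3, gpdf_pos (x - μhat)]
  -- integrate the pointwise bound over A
  have hint1 : IntegrableOn (fun x =>
      e * gpdf (x - μhat) + e * δ * (x - y) * gpdf (x - μhat)) A := by
    have : Integrable (fun x =>
        e * gpdf (x - μhat) + e * δ * (x - y) * gpdf (x - μhat)) := by
      have h1 := (hg.const_mul e)
      have h2 := (hxg.const_mul (e * δ)).sub ((hg.const_mul (e * δ * y)))
      have := h1.add h2
      refine this.congr ?_
      filter_upwards with x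
      simp only [Pi.add_apply, Pi.sub_apply]
      ring
    exact this.integrableOn
  have hkey : e * Z1 μhat t ≤ Z1 μ t := by
    have hmono := setIntegral_mono_on hint1 hgμ.integrableOn hmeas
      (fun x _ => hpt x)
    have hsplit : ∫ x in A, (e * gpdf (x - μhat) + e * δ * (x - y) * gpdf (x - μhat))
        = e * Z1 μhat t + e * δ * ((∫ x in A, x * gpdf (x - μhat)) - y * Z1 μhat t) := by
      have expand : ∀ x : ℝ, e * gpdf (x - μhat) + e * δ * (x - y) * gpdf (x - μhat)
          = e * gpdf (x - μhat) + (e * δ * (x * gpdf (x - μhat))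
            - e * δ * y * gpdf (x - μhat)) := by intro x; ring
      have hsub : Integrable (fun x =>
          e * δ * (x * gpdf (x - μhat)) - e * δ * y * gpdf (x - μhat)) := by
        have h2 := (hxg.const_mul (e * δ)).sub (hg.const_mul (e * δ * y))
        refine h2.congr ?_
        filter_upwards with x
        simp only [Pi.sub_apply]
      simp_rw [expand]
      rw [integral_add (hg.const_mul e).integrableOn hsub.integrableOn,
        integral_sub (hxg.const_mul (e * δ)).integrableOn
          (hg.const_mul (e * δ * y)).integrableOn,
        integral_const_mul, integral_const_mul, integral_const_mul]
      rw [Z1_eq μhat t ht, ← hA]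
      ring
    rw [hsplit, hI] at hmono
    simp only [sub_self, mul_zero, add_zero] at hmono
    rw [Z1_eq μ t ht, ← hA]
    exact hmono
  -- final assembly
  have hy : gpdf (y - μ) = e * gpdf (y - μhat) := by
    rw [hid y, he]
  rw [div_le_div_iff₀ hZμ hZh, hy]
  have := mul_le_mul_of_nonneg_left hkey (gpdf_pos (y - μhat)).le
  nlinarith [this]
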